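/- arXiv:2304.05228 — 3 statements merged into one kernel-verified Lean document; each statement's English description precedes it below -/
import Mathlib

section
/- Let (X, Y) be a complete hereditary cotorsion pair in an abelian category A, let A be an object of A, and let n ≥ 1 be an integer. If A has X-resolution dimension at most n, then for any special proper X-resolution ⋯ → X_1 → X_0 → A → 0 (i.e., an X-resolution in which every kernel K_i = Ker(X_i → X_{i-1}) lies in Y = X^⊥, with X_{-1} = A), the kernel K_{n-1} = Ker(X_{n-1} → X_{n-2}) belongs to X. -/
open CategoryTheory Limits

universe w v u

namespace PaperAB

variable {C : Type u} [Category.{v} C] [Abelian C] [HasExt.{w} C]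

/-- Vanishing of `Ext^n(A, B)`. -/
def extZero (A B : C) (n : ℕ) : Prop := Subsingleton (Abelian.Ext A B n)

/-- The right `Ext^1`-orthogonal class of a class `𝒳`. -/
def rightOrth (𝒳 : C → Prop) : C → Prop := fun B => ∀ A, 𝒳 A → extZero A B 1

/-- The left `Ext^1`-orthogonal class of a class `𝒴`. -/
def leftOrth (𝒴 : C → Prop) : C → Prop := fun A => ∀ B, 𝒴 B → extZero A B 1

/-- `f, g` form a short exact sequence `0 → A → B → D → 0`. -/
def IsSES {A B D : C} (f : A ⟶ B) (g : B ⟶ D) : Prop :=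
  ∃ (zero : f ≫ g = 0), (ShortComplex.mk f g zero).ShortExact

/-- `(𝒳, 𝒴)` is a cotorsion pair. -/
structure CotorsionPair (𝒳 𝒴 : C → Prop) : Prop where
  eqLeft : ∀ A, 𝒳 A ↔ leftOrth 𝒴 A
  eqRight : ∀ B, 𝒴 B ↔ rightOrth 𝒳 B

/-- Completeness of a pair of classes `(𝒳, 𝒴)`: every object admits a special
`𝒳`-precover and a special `𝒴`-preenvelope. -/
def Complete (𝒳 𝒴 : C → Prop) : Prop :=
  ∀ A : C,
    (∃ (Y X : C) (f : Y ⟶ X) (g : X ⟶ A), IsSES f g ∧ 𝒳 X ∧ 𝒴 Y) ∧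
    (∃ (Y X : C) (f : A ⟶ Y) (g : Y ⟶ X), IsSES f g ∧ 𝒴 Y ∧ 𝒳 X)

/-- Heredity: `Ext^n(𝒳, 𝒴) = 0` for all `n ≥ 1`. -/
def Hereditary (𝒳 𝒴 : C → Prop) : Prop :=
  ∀ A B, 𝒳 A → 𝒴 B → ∀ n, 1 ≤ n → extZero A B n

/-- Complete hereditary cotorsion pair. -/
structure CHCP (𝒳 𝒴 : C → Prop) : Prop where
  cotorsion : CotorsionPair 𝒳 𝒴
  complete : Complete 𝒳 𝒴
  hereditary : Hereditary 𝒳 𝒴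

/-- `ResDimLE 𝒳 A n` : there exists an exact sequence
`0 → X n → ⋯ → X 0 → A → 0` with all `X i ∈ 𝒳`. -/
def ResDimLE (𝒳 : C → Prop) (A : C) (n : ℕ) : Prop :=
  ∃ (X : ℕ → C) (d : ∀ i, X (i + 1) ⟶ X i) (ε : X 0 ⟶ A),
    (∀ i, i ≤ n → 𝒳 (X i)) ∧ (∀ i, n < i → IsZero (X i)) ∧ Epi ε ∧
    (∃ (zero : d 0 ≫ ε = 0), (ShortComplex.mk (d 0) ε zero).Exact) ∧
    (∀ i, ∃ (zero : d (i + 1) ≫ d i = 0),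
      (ShortComplex.mk (d (i + 1)) (d i) zero).Exact)

/-- Objects of finite `𝒳`-resolution dimension (the class `X̂`). -/
def FinResDim (𝒳 : C → Prop) (A : C) : Prop := ∃ n, ResDimLE 𝒳 A n

/-- The `𝒳`-resolution dimension of `A`, in `ℕ∞`. -/
noncomputable def ResDim (𝒳 : C → Prop) (A : C) : ℕ∞ :=
  sInf {m : ℕ∞ | ∃ n : ℕ, m = (n : ℕ∞) ∧ ResDimLE 𝒳 A n}

/-- The intersection of two classes. -/
def Inter (𝒳 𝒴 : C → Prop) : C → Prop := fun A => 𝒳 A ∧ 𝒴 A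

def ClosedUnderExtensions (𝒲 : C → Prop) : Prop :=
  ∀ ⦃A B D : C⦄ (f : A ⟶ B) (g : B ⟶ D), IsSES f g → 𝒲 A → 𝒲 D → 𝒲 B

def ClosedUnderKernels (𝒲 : C → Prop) : Prop :=
  ∀ ⦃A B D : C⦄ (f : A ⟶ B) (g : B ⟶ D), IsSES f g → 𝒲 B → 𝒲 D → 𝒲 A

def ClosedUnderCokernels (𝒲 : C → Prop) : Prop :=
  ∀ ⦃A B D : C⦄ (f : A ⟶ B) (g : B ⟶ D), IsSES f g → 𝒲 A → 𝒲 B → 𝒲 D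

def ClosedUnderSummands (𝒲 : C → Prop) : Prop :=
  ∀ ⦃A B : C⦄ (i : A ⟶ B) (p : B ⟶ A), i ≫ p = 𝟙 A → 𝒲 B → 𝒲 A

/-- A class is thick if it is closed under direct summands and has the
two-out-of-three property on short exact sequences. -/
def IsThick (𝒲 : C → Prop) : Prop :=
  ClosedUnderSummands 𝒲 ∧ ClosedUnderExtensions 𝒲 ∧
    ClosedUnderKernels 𝒲 ∧ ClosedUnderCokernels 𝒲

/-- A class is left thick if it is closed under direct summands, extensions and
kernels of epimorphisms. -/
def LeftThick (𝒲 : C → Prop) : Prop :=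
  ClosedUnderSummands 𝒲 ∧ ClosedUnderExtensions 𝒲 ∧ ClosedUnderKernels 𝒲

/-- A class is right thick if it is closed under direct summands, extensions and
cokernels of monomorphisms. -/
def RightThick (𝒲 : C → Prop) : Prop :=
  ClosedUnderSummands 𝒲 ∧ ClosedUnderExtensions 𝒲 ∧ ClosedUnderCokernels 𝒲

/-- `ω` is a cogenerator for `𝒳`. -/
def IsCogeneratorFor (ω 𝒳 : C → Prop) : Prop :=
  (∀ A, ω A → 𝒳 A) ∧
  ∀ A, 𝒳 A → ∃ (W A' : C) (f : A ⟶ W) (g : W ⟶ A'), IsSES f g ∧ ω W ∧ 𝒳 A'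

/-- `ω` is an injective cogenerator for `𝒳`. -/
def IsInjCogeneratorFor (ω 𝒳 : C → Prop) : Prop :=
  IsCogeneratorFor ω 𝒳 ∧ ∀ A W, 𝒳 A → ω W → ∀ n, 1 ≤ n → extZero A W n

/-- A left weak Auslander–Buchweitz context `(𝒳, 𝒴, ω)`. -/
structure LeftWeakABContext (𝒳 𝒴 ω : C → Prop) : Prop where
  ab1 : LeftThick 𝒳
  ab2 : RightThick 𝒴
  ab2' : ∀ A, 𝒴 A → FinResDim 𝒳 A
  ab3 : (∀ A, ω A ↔ 𝒳 A ∧ 𝒴 A) ∧ IsInjCogeneratorFor ω 𝒳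

/-- A left Auslander–Buchweitz context: a left weak AB-context in which every
object has finite `𝒳`-resolution dimension. -/
structure LeftABContext (𝒳 𝒴 ω : C → Prop) extends LeftWeakABContext 𝒳 𝒴 ω : Prop where
  hat_all : ∀ A : C, FinResDim 𝒳 A

end PaperAB

/-!
`K (n-1) ∈ 𝒳` means `Ext¹(K (n-1), B) = 0` for every `B ∈ 𝒴`. Since `Ext^{≥1}(𝒳, 𝒴) = 0`,
dimension shifting along the sequences `0 → K i → X i → K (i-1) → 0` (with `K (-1) = A`)
raises this to `Ext^{n+1}(A, B) = 0`, and the latter holds because shifting along the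
syzygies of an `𝒳`-resolution of `A` of length `n` lowers it to `Ext^{≥1}(𝒳, B) = 0`.
-/

namespace PaperAB

open Abelian

variable {C : Type u} [Category.{v} C] [Abelian C]

section Resolutions

variable {𝒳 : C → Prop} {M : C}

lemma ResDimLE.exists_iso_of_zero (hM : ResDimLE 𝒳 M 0) : ∃ X₀, 𝒳 X₀ ∧ Nonempty (X₀ ≅ M) := by
  obtain ⟨X, d, ε, hX, hXzero, hε, ⟨_, hexact⟩, _⟩ := hM
  have : Mono ε := hexact.mono_g ((hXzero 1 zero_lt_one).eq_of_src _ _)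
  have : IsIso ε := isIso_of_mono_of_epi ε
  exact ⟨X 0, hX 0 le_rfl, ⟨asIso ε⟩⟩

lemma ResDimLE.exists_isSES_of_succ {n : ℕ} (hM : ResDimLE 𝒳 M (n + 1)) :
    ∃ (K X₀ : C) (f : K ⟶ X₀) (g : X₀ ⟶ M), IsSES f g ∧ 𝒳 X₀ ∧ ResDimLE 𝒳 K n := by
  obtain ⟨X, d, ε, hX, hXzero, hε, ⟨hdε, hexact₀⟩, hexact⟩ := hM
  refine ⟨kernel ε, X 0, kernel.ι ε, ε,
    ⟨kernel.condition ε, .mk' (ShortComplex.exact_kernel ε) inferInstance hε⟩, hX 0 (by omega),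
    fun i => X (i + 1), fun i => d (i + 1), kernel.lift ε (d 0) hdε,
    fun i hi => hX (i + 1) (by omega), fun i hi => hXzero (i + 1) (by omega),
    hexact₀.epi_kernelLift, ?_, fun i => hexact (i + 1)⟩
  obtain ⟨hd, hexact₁⟩ := hexact 0
  have hd' : d 1 ≫ kernel.lift ε (d 0) hdε = 0 := by
    rw [← cancel_mono (kernel.ι ε), Category.assoc, kernel.lift_ι, hd, zero_comp]
  let φ : ShortComplex.mk (d 1) (kernel.lift ε (d 0) hdε) hd' ⟶ ShortComplex.mk (d 1) (d 0) hd :=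
    { τ₁ := 𝟙 _
      τ₂ := 𝟙 _
      τ₃ := kernel.ι ε }
  have : Mono φ.τ₃ := inferInstanceAs (Mono (kernel.ι ε))
  exact ⟨hd', (ShortComplex.exact_iff_of_epi_of_isIso_of_mono φ).2 hexact₁⟩

end Resolutions

variable [HasExt.{w} C]

section DimensionShifting

variable {A A' B : C} {n : ℕ}

lemma extZero_of_forall_eq_zero (h : ∀ x : Ext A B n, x = 0) : extZero A B n :=
  ⟨fun x y => by rw [h x, h y]⟩

lemma extZero.eq_zero (h : extZero A B n) (x : Ext A B n) : x = 0 :=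
  @Subsingleton.elim _ h x 0

lemma extZero_of_iso (e : A' ≅ A) (h : extZero A' B n) : extZero A B n := by
  refine extZero_of_forall_eq_zero fun z => ?_
  have hz : (Ext.mk₀ e.inv).comp ((Ext.mk₀ e.hom).comp z (zero_add n)) (zero_add n) = z := by
    rw [Ext.mk₀_comp_mk₀_assoc, e.inv_hom_id, Ext.mk₀_id_comp]
  rw [← hz, h.eq_zero ((Ext.mk₀ e.hom).comp z (zero_add n)), Ext.comp_zero]

variable {S : ShortComplex C} (hS : S.ShortExact)
include hS

lemma extZero_X₃_of_shortExact (h₁ : extZero S.X₁ B n) (h₂ : extZero S.X₂ B (n + 1)) :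
    extZero S.X₃ B (n + 1) := by
  refine extZero_of_forall_eq_zero fun z => ?_
  obtain ⟨x, rfl⟩ := Ext.contravariant_sequence_exact₃ hS B z (h₂.eq_zero _) (add_comm 1 n)
  rw [h₁.eq_zero x, Ext.comp_zero]

lemma extZero_X₁_of_shortExact (h₂ : extZero S.X₂ B n) (h₃ : extZero S.X₃ B (n + 1)) :
    extZero S.X₁ B n := by
  refine extZero_of_forall_eq_zero fun x => ?_
  obtain ⟨y, rfl⟩ := Ext.contravariant_sequence_exact₁ hS B x (add_comm 1 n) (h₃.eq_zero _)
  rw [h₂.eq_zero y, Ext.comp_zero]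

end DimensionShifting

namespace Hereditary

variable {𝒳 𝒴 : C → Prop} (hher : Hereditary 𝒳 𝒴) {B : C} (hB : 𝒴 B)
include hher hB

lemma extZero_cokernel_succ_of_isSES {K X₀ M : C} {f : K ⟶ X₀} {g : X₀ ⟶ M} (hfg : IsSES f g)
    (hX₀ : 𝒳 X₀) {m : ℕ} (hK : extZero K B m) : extZero M B (m + 1) :=
  extZero_X₃_of_shortExact hfg.2 hK (hher _ _ hX₀ hB _ (by omega))

lemma extZero_kernel_of_isSES {K X₀ M : C} {f : K ⟶ X₀} {g : X₀ ⟶ M} (hfg : IsSES f g)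
    (hX₀ : 𝒳 X₀) {m : ℕ} (hm : 1 ≤ m) (hM : extZero M B (m + 1)) : extZero K B m :=
  extZero_X₁_of_shortExact hfg.2 (hher _ _ hX₀ hB m hm) hM

lemma extZero_of_resDimLE {M : C} {n : ℕ} (hM : ResDimLE 𝒳 M n) {m : ℕ} (hnm : n < m) :
    extZero M B m := by
  induction n generalizing M m with
  | zero =>
    obtain ⟨X₀, hX₀, ⟨e⟩⟩ := hM.exists_iso_of_zero
    exact extZero_of_iso e (hher _ _ hX₀ hB m hnm)
  | succ n ih =>
    obtain ⟨K, X₀, f, g, hfg, hX₀, hK⟩ := hM.exists_isSES_of_succ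
    obtain ⟨m, rfl⟩ : ∃ m', m = m' + 1 := ⟨m - 1, by omega⟩
    exact hher.extZero_cokernel_succ_of_isSES hB hfg hX₀ (ih hK (by omega))

lemma extZero_syzygy {A : C} {X K : ℕ → C} (hX : ∀ i, 𝒳 (X i))
    (h0 : ∃ (f : K 0 ⟶ X 0) (g : X 0 ⟶ A), IsSES f g)
    (hi : ∀ i, ∃ (f : K (i + 1) ⟶ X (i + 1)) (g : X (i + 1) ⟶ K i), IsSES f g)
    (i : ℕ) {m : ℕ} (hm : 1 ≤ m) (hA : extZero A B (m + i + 1)) : extZero (K i) B m := by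
  induction i generalizing m with
  | zero =>
    obtain ⟨f, g, hfg⟩ := h0
    exact hher.extZero_kernel_of_isSES hB hfg (hX 0) hm hA
  | succ i ih =>
    obtain ⟨f, g, hfg⟩ := hi i
    refine hher.extZero_kernel_of_isSES hB hfg (hX (i + 1)) hm (ih (by omega) ?_)
    rwa [show m + 1 + i + 1 = m + (i + 1) + 1 by omega]

end Hereditary

theorem statement0_general {C : Type u} [Category.{v} C] [Abelian C] [HasExt.{w} C]
    {𝒳 𝒴 : C → Prop} (h : CHCP 𝒳 𝒴) (A : C) (n : ℕ) (hn : 1 ≤ n)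
    (hdim : ResDimLE 𝒳 A n) (X K : ℕ → C)
    (hX : ∀ i, 𝒳 (X i))
    (h0 : ∃ (f : K 0 ⟶ X 0) (g : X 0 ⟶ A), IsSES f g)
    (hi : ∀ i, ∃ (f : K (i + 1) ⟶ X (i + 1)) (g : X (i + 1) ⟶ K i), IsSES f g) :
    𝒳 (K (n - 1)) := by
  rw [h.cotorsion.eqLeft]
  intro B hB
  have hA : extZero A B (1 + (n - 1) + 1) :=
    h.hereditary.extZero_of_resDimLE hB hdim (by omega)
  exact h.hereditary.extZero_syzygy hB hX h0 hi (n - 1) le_rfl hA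

/-- If `(𝒳, 𝒴)` is a complete hereditary cotorsion pair, `A` has
`𝒳`-resolution dimension at most `n ≥ 1`, then for any special proper
`𝒳`-resolution of `A` (with syzygies `K i ∈ 𝒴`), the syzygy `K (n-1)` lies in `𝒳`. -/
theorem statement0 {C : Type u} [Category.{v} C] [Abelian C] [HasExt.{w} C]
    {𝒳 𝒴 : C → Prop} (h : CHCP 𝒳 𝒴) (A : C) (n : ℕ) (hn : 1 ≤ n)
    (hdim : ResDimLE 𝒳 A n) (X K : ℕ → C)
    (hX : ∀ i, 𝒳 (X i)) (hK : ∀ i, 𝒴 (K i))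
    (h0 : ∃ (f : K 0 ⟶ X 0) (g : X 0 ⟶ A), IsSES f g)
    (hi : ∀ i, ∃ (f : K (i + 1) ⟶ X (i + 1)) (g : X (i + 1) ⟶ K i), IsSES f g) :
    𝒳 (K (n - 1)) :=
  statement0_general h A n hn hdim X K hX h0 hi

end PaperAB
end

section
/- Let X and G be classes of objects in an abelian category A with X closed under direct summands, and set H = G^⊥ and Y = X^⊥. If X is a cogenerator for G (i.e., X ⊆ G and every G ∈ G fits in an exact sequence 0 → G → W → G' → 0 with W ∈ X, G' ∈ G), then G ∩ H ⊆ X ∩ Y. If moreover (G, H) is a complete cotorsion pair and G ∩ X̂ = X (where X̂ is the class of objects with finite X-resolution dimension), then G ∩ H = X ∩ Y. -/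
open CategoryTheory Limits

universe w v u

open CategoryTheory Limits Abelian

universe w'

namespace PaperABAux

variable {C : Type u} [Category.{v} C] [Abelian C]

section
variable [HasDerivedCategory.{w'} C]

/-- `H⁰ ∘ single ≅ 𝟭`. -/
noncomputable def singleCompHomologyIso :
    DerivedCategory.singleFunctor C 0 ⋙ DerivedCategory.homologyFunctor C 0 ≅ 𝟭 C :=
  Functor.isoWhiskerLeft (CochainComplex.singleFunctor C 0) (DerivedCategory.homologyFunctorFactors C 0) ≪≫
    HomologicalComplex.homologyFunctorSingleIso C _ 0

variable [HasExt.{w} C]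

/-- Extract an honest morphism from a degree-zero Ext class. -/
noncomputable def extToHom {X Y : C} (α : Abelian.Ext X Y 0) : X ⟶ Y :=
  (singleCompHomologyIso (C := C)).inv.app X ≫
    (DerivedCategory.homologyFunctor C 0).map
      (α.hom ≫ (shiftFunctorZero' (DerivedCategory C) ((0 : ℕ) : ℤ) (by simp)).hom.app _) ≫
    (singleCompHomologyIso (C := C)).hom.app Y

lemma extToHom_mk₀ {X Y : C} (f : X ⟶ Y) : extToHom (Ext.mk₀ f) = f := by
  dsimp [extToHom]
  rw [Ext.mk₀_hom]
  dsimp [ShiftedHom.mk₀]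
  simp only [Functor.id_obj, Category.comp_id, Category.assoc, Iso.inv_hom_id_app]
  have h := (singleCompHomologyIso (C := C)).hom.naturality f
  dsimp at h
  rw [h, Iso.inv_hom_id_app_assoc]

lemma extToHom_mk₀_comp {X Y Z : C} (f : X ⟶ Y) (β : Abelian.Ext Y Z 0) :
    extToHom ((Ext.mk₀ f).comp β (zero_add 0)) = f ≫ extToHom β := by
  dsimp [extToHom]
  rw [Ext.comp_hom, Ext.mk₀_hom, ShiftedHom.mk₀_comp, Category.assoc, Functor.map_comp]
  have h := (singleCompHomologyIso (C := C)).inv.naturality f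
  dsimp at h
  simp only [← Category.assoc]
  rw [← h]

end

variable [HasExt.{w} C]

lemma exists_retraction_of_ext₁ {S : ShortComplex C} (hS : S.ShortExact)
    (h : Subsingleton (Abelian.Ext S.X₃ S.X₁ 1)) :
    ∃ r : S.X₂ ⟶ S.X₁, S.f ≫ r = 𝟙 S.X₁ := by
  letI := HasDerivedCategory.standard C
  obtain ⟨x₂, hx₂⟩ := Abelian.Ext.contravariant_sequence_exact₁ hS S.X₁
    (Ext.mk₀ (𝟙 S.X₁)) rfl (Subsingleton.elim _ _)
  refine ⟨extToHom x₂, ?_⟩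
  have h2 := extToHom_mk₀_comp S.f x₂
  rw [hx₂, extToHom_mk₀] at h2
  exact h2.symm

lemma subsingleton_ext₂ {S : ShortComplex C} (hS : S.ShortExact) (Y : C)
    (h₁ : Subsingleton (Abelian.Ext S.X₁ Y 1)) (h₃ : Subsingleton (Abelian.Ext S.X₃ Y 1)) :
    Subsingleton (Abelian.Ext S.X₂ Y 1) := by
  refine subsingleton_of_forall_eq 0 fun x₂ => ?_
  obtain ⟨x₃, hx₃⟩ := Abelian.Ext.contravariant_sequence_exact₂ hS Y x₂ (Subsingleton.elim _ _)
  rw [← hx₃, Subsingleton.elim x₃ 0]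
  simp

end PaperABAux

namespace PaperAB

open PaperABAux ZeroObject

variable {C : Type u} [Category.{v} C] [Abelian C] [HasExt.{w} C]

omit [HasExt.{w} C] in
lemma resDimLE_one' {𝒳 : C → Prop} {A B Q : C} (f : A ⟶ B) (g : B ⟶ Q)
    (w : f ≫ g = 0) (h : (ShortComplex.mk f g w).ShortExact)
    (hA : 𝒳 A) (hB : 𝒳 B) : ResDimLE 𝒳 Q 1 := by
  refine ⟨fun i => match i with | 0 => B | 1 => A | _ + 2 => 0,
    fun i => match i with | 0 => f | _ + 1 => 0, g, ?_, ?_, h.epi_g, ⟨w, h.exact⟩, ?_⟩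
  · intro i hi
    interval_cases i
    · exact hB
    · exact hA
  · intro i hi
    obtain ⟨j, rfl⟩ : ∃ j, i = j + 2 := ⟨i - 2, by omega⟩
    exact Limits.isZero_zero C
  · intro i
    match i with
    | 0 =>
      refine ⟨zero_comp, ?_⟩
      have := h.mono_f
      exact (ShortComplex.exact_iff_mono _ rfl).2 this
    | j + 1 =>
      exact ⟨zero_comp, ShortComplex.exact_of_isZero_X₂ _ (Limits.isZero_zero C)⟩

end PaperAB

namespace PaperAB

/-- Let `𝒳` be closed under direct summands, `𝒴 = 𝒳^⊥`,
`ℋ = 𝒢^⊥`. If `𝒳` is a cogenerator for `𝒢`, then `𝒢 ∩ ℋ ⊆ 𝒳 ∩ 𝒴`; if moreover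
`(𝒢, ℋ)` is a complete cotorsion pair and `𝒢 ∩ 𝒳̂ = 𝒳`, then `𝒢 ∩ ℋ = 𝒳 ∩ 𝒴`. -/
theorem statement4 {C : Type u} [Category.{v} C] [Abelian C] [HasExt.{w} C]
    {𝒳 𝒢 : C → Prop} (hsum : ClosedUnderSummands 𝒳)
    (hcog : IsCogeneratorFor 𝒳 𝒢) :
    (∀ A, 𝒢 A → rightOrth 𝒢 A → 𝒳 A ∧ rightOrth 𝒳 A) ∧
    (CotorsionPair 𝒢 (rightOrth 𝒢) → Complete 𝒢 (rightOrth 𝒢) →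
      (∀ A, (𝒢 A ∧ FinResDim 𝒳 A) ↔ 𝒳 A) →
      ∀ A, (𝒢 A ∧ rightOrth 𝒢 A) ↔ (𝒳 A ∧ rightOrth 𝒳 A)) := by
  have key1 : ∀ A, 𝒢 A → rightOrth 𝒢 A → 𝒳 A ∧ rightOrth 𝒳 A := by
    intro A hGA hHA
    obtain ⟨W, A', f, g, ⟨z, hse⟩, hW, hA'⟩ := hcog.2 A hGA
    obtain ⟨r, hr⟩ := PaperABAux.exists_retraction_of_ext₁ hse (hHA A' hA')
    exact ⟨hsum f r hr hW, fun X hX => hHA X (hcog.1 X hX)⟩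
  refine ⟨key1, fun hcp hcompl hX A => ⟨fun h => key1 A h.1 h.2, ?_⟩⟩
  rintro ⟨hXA, hYA⟩
  have hGA : 𝒢 A := ((hX A).2 hXA).1
  refine ⟨hGA, ?_⟩
  obtain ⟨H, G₀, f, g, ⟨z, hse⟩, hH, hG₀⟩ := (hcompl A).2
  have hGH : 𝒢 H := by
    rw [hcp.eqLeft]
    intro Y hY
    exact PaperABAux.subsingleton_ext₂ hse Y ((hcp.eqLeft A).1 hGA Y hY)
      ((hcp.eqLeft G₀).1 hG₀ Y hY)
  have hXH : 𝒳 H := (key1 H hGH hH).1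
  have hG₀X : 𝒳 G₀ := (hX G₀).1 ⟨hG₀, 1, resDimLE_one' f g z hse hXA hXH⟩
  have hsub : Subsingleton (Abelian.Ext G₀ A 1) := hYA G₀ hG₀X
  intro G hG
  have hGH1 : Subsingleton (Abelian.Ext G H 1) := hH G hG
  refine subsingleton_of_forall_eq 0 fun e => ?_
  obtain ⟨x₃, hx₃⟩ := Abelian.Ext.covariant_sequence_exact₁ G hse e (Subsingleton.elim _ _) rfl
  rw [← hx₃, Subsingleton.elim hse.extClass 0]
  simp

end PaperAB
end

section
/- Let X ⊆ G ⊆ A be classes in an abelian category such that (X, X^⊥) is a complete hereditary cotorsion pair and (G, G^⊥, X ∩ X^⊥) is a left AB-context. Then (G, X̂, X^⊥) is a hereditary Hovey triple: X̂ (the class of objects with finite X-resolution dimension) is thick, (G, X̂ ∩ X^⊥) is a complete hereditary cotorsion pair, and (G ∩ X̂, X^⊥) = (X, X^⊥) is a complete hereditary cotorsion pair. -/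
open CategoryTheory Limits

universe w v u

namespace PaperAB

open CategoryTheory.Abelian ZeroObject DerivedCategory

section Aux

variable {C : Type u} [Category.{v} C] [Abelian C] [HasExt.{w} C]

lemma extZero_iff {A B : C} {n : ℕ} : extZero A B n ↔ ∀ x : Ext A B n, x = 0 :=
  ⟨fun h x => @Subsingleton.elim _ h x 0, fun h => ⟨fun a b => by rw [h a, h b]⟩⟩

lemma extZero_retract_fst {A B Y : C} (i : A ⟶ B) (p : B ⟶ A) (hip : i ≫ p = 𝟙 A) {n : ℕ}
    (h : extZero B Y n) : extZero A Y n := by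
  rw [extZero_iff] at h ⊢
  intro x
  have hx : x = (Ext.mk₀ i).comp ((Ext.mk₀ p).comp x (zero_add n)) (zero_add n) := by
    rw [Ext.mk₀_comp_mk₀_assoc, hip, Ext.mk₀_id_comp]
  rw [hx, h ((Ext.mk₀ p).comp x (zero_add n)), Ext.comp_zero]

lemma extZero_retract_snd {X A B : C} (i : A ⟶ B) (p : B ⟶ A) (hip : i ≫ p = 𝟙 A) {n : ℕ}
    (h : extZero X B n) : extZero X A n := by
  rw [extZero_iff] at h ⊢
  intro x
  have hx : x = (x.comp (Ext.mk₀ i) (add_zero n)).comp (Ext.mk₀ p) (add_zero n) := by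
    rw [Ext.comp_assoc_of_third_deg_zero, Ext.mk₀_comp_mk₀, hip, Ext.comp_mk₀_id]
  rw [hx, h (x.comp (Ext.mk₀ i) (add_zero n)), Ext.zero_comp]

lemma extZero_iso_fst {A A' Y : C} (e : A ≅ A') {n : ℕ} (h : extZero A Y n) : extZero A' Y n :=
  extZero_retract_fst e.inv e.hom (by simp) h

lemma extZero_iso_snd {X A A' : C} (e : A ≅ A') {n : ℕ} (h : extZero X A n) : extZero X A' n :=
  extZero_retract_snd e.inv e.hom (by simp) h

lemma IsSES.monoF {A B D : C} {f : A ⟶ B} {g : B ⟶ D} (h : IsSES f g) : Mono f := by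
  obtain ⟨z, hse⟩ := h; exact hse.mono_f

lemma IsSES.epiG {A B D : C} {f : A ⟶ B} {g : B ⟶ D} (h : IsSES f g) : Epi g := by
  obtain ⟨z, hse⟩ := h; exact hse.epi_g

-- contravariant: for a SES 0 → A → B → D → 0 and Y
lemma extZero_mid_fst {A B D Y : C} {f : A ⟶ B} {g : B ⟶ D} (h : IsSES f g) {n : ℕ}
    (hA : extZero A Y n) (hD : extZero D Y n) : extZero B Y n := by
  obtain ⟨z, hse⟩ := h
  rw [extZero_iff] at hA hD ⊢
  intro x
  obtain ⟨x₁, hx₁⟩ := Ext.contravariant_sequence_exact₂ hse Y x (hA _)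
  rw [← hx₁, hD x₁, Ext.comp_zero]

lemma extZero_left_fst {A B D Y : C} {f : A ⟶ B} {g : B ⟶ D} (h : IsSES f g) {n : ℕ}
    (hB : extZero B Y n) (hD : extZero D Y (n + 1)) : extZero A Y n := by
  obtain ⟨z, hse⟩ := h
  rw [extZero_iff] at hB hD ⊢
  intro x
  obtain ⟨x₂, hx₂⟩ := Ext.contravariant_sequence_exact₁ hse Y x (by omega : 1 + n = n + 1) (hD _)
  rw [← hx₂, hB x₂, Ext.comp_zero]

lemma extZero_right_fst {A B D Y : C} {f : A ⟶ B} {g : B ⟶ D} (h : IsSES f g) {n : ℕ}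
    (hA : extZero A Y n) (hB : extZero B Y (n + 1)) : extZero D Y (n + 1) := by
  obtain ⟨z, hse⟩ := h
  rw [extZero_iff] at hA hB ⊢
  intro x
  obtain ⟨x₁, hx₁⟩ := Ext.contravariant_sequence_exact₃ hse Y x (hB _) (by omega : 1 + n = n + 1)
  rw [← hx₁, hA x₁, Ext.comp_zero]

-- covariant: for a SES 0 → A → B → D → 0 and X
lemma extZero_mid_snd {X A B D : C} {f : A ⟶ B} {g : B ⟶ D} (h : IsSES f g) {n : ℕ}
    (hA : extZero X A n) (hD : extZero X D n) : extZero X B n := by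
  obtain ⟨z, hse⟩ := h
  rw [extZero_iff] at hA hD ⊢
  intro x
  obtain ⟨x₁, hx₁⟩ := Ext.covariant_sequence_exact₂ X hse x (hD _)
  rw [← hx₁, hA x₁, Ext.zero_comp]

lemma extZero_left_snd {X A B D : C} {f : A ⟶ B} {g : B ⟶ D} (h : IsSES f g) {n : ℕ}
    (hB : extZero X B (n + 1)) (hD : extZero X D n) : extZero X A (n + 1) := by
  obtain ⟨z, hse⟩ := h
  rw [extZero_iff] at hB hD ⊢
  intro x
  obtain ⟨x₃, hx₃⟩ := Ext.covariant_sequence_exact₁ X hse x (hB _) (by omega : n + 1 = n + 1)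
  rw [← hx₃, hD x₃, Ext.zero_comp]

lemma extZero_right_snd {X A B D : C} {f : A ⟶ B} {g : B ⟶ D} (h : IsSES f g) {n : ℕ}
    (hB : extZero X B n) (hA : extZero X A (n + 1)) : extZero X D n := by
  obtain ⟨z, hse⟩ := h
  rw [extZero_iff] at hB hA ⊢
  intro x
  obtain ⟨x₂, hx₂⟩ := Ext.covariant_sequence_exact₃ X hse x rfl (hA _)
  rw [← hx₂, hB x₂, Ext.zero_comp]

-- lemmas using vanishing of the ext class (split-like conclusions without splitting)
lemma extZero_right_of_extClass_fst {A B D Y : C} {f : A ⟶ B} {g : B ⟶ D} (h : IsSES f g)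
    (h0 : extZero D A 1) {n : ℕ} (hB : extZero B Y (n + 1)) : extZero D Y (n + 1) := by
  obtain ⟨z, hse⟩ := h
  rw [extZero_iff] at hB ⊢
  intro x
  obtain ⟨x₁, hx₁⟩ := Ext.contravariant_sequence_exact₃ hse Y x (hB _) (by omega : 1 + n = n + 1)
  rw [← hx₁, @Subsingleton.elim _ h0 hse.extClass 0, Ext.zero_comp]

lemma extZero_left_of_extClass_fst {A B D Y : C} {f : A ⟶ B} {g : B ⟶ D} (h : IsSES f g)
    (h0 : extZero D A 1) {n : ℕ} (hB : extZero B Y n) : extZero A Y n := by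
  obtain ⟨z, hse⟩ := h
  rw [extZero_iff] at hB ⊢
  intro x
  obtain ⟨x₂, hx₂⟩ := Ext.contravariant_sequence_exact₁ hse Y x rfl
    (by rw [@Subsingleton.elim _ h0 hse.extClass 0, Ext.zero_comp])
  rw [← hx₂, hB x₂, Ext.comp_zero]

lemma extZero_left_of_extClass_snd {X A B D : C} {f : A ⟶ B} {g : B ⟶ D} (h : IsSES f g)
    (h0 : extZero D A 1) {n : ℕ} (hB : extZero X B (n + 1)) : extZero X A (n + 1) := by
  obtain ⟨z, hse⟩ := h
  rw [extZero_iff] at hB ⊢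
  intro x
  obtain ⟨x₃, hx₃⟩ := Ext.covariant_sequence_exact₁ X hse x (hB _) rfl
  rw [← hx₃, @Subsingleton.elim _ h0 hse.extClass 0, Ext.comp_zero]


lemma isSES_of_epi {B D : C} (g : B ⟶ D) [Epi g] : IsSES (kernel.ι g) g := by
  refine ⟨kernel.condition g, ⟨?_⟩⟩
  · exact ShortComplex.exact_of_f_is_kernel _ (kernelIsKernel g)

lemma isSES_of_mono {A B : C} (f : A ⟶ B) [Mono f] : IsSES f (cokernel.π f) := by
  refine ⟨cokernel.condition f, ⟨?_⟩⟩
  · exact ShortComplex.exact_of_g_is_cokernel _ (cokernelIsCokernel f)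

lemma isSES_zero_id (A : C) : IsSES (0 : (0 : C) ⟶ A) (𝟙 A) := by
  have hm : Mono (0 : (0 : C) ⟶ A) := ⟨fun a b _ => (isZero_zero C).eq_of_tgt a b⟩
  refine ⟨by simp, ?_⟩
  have : (ShortComplex.mk (0 : (0 : C) ⟶ A) (𝟙 A) (by simp)).Exact := by
    rw [ShortComplex.exact_iff_mono _ rfl]
    infer_instance
  exact { exact := this, mono_f := hm, epi_g := by infer_instance }

lemma resDimLE_mono {𝒲 𝒳 : C → Prop} (h : ∀ A, 𝒲 A → 𝒳 A) {A : C} {n : ℕ}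
    (hA : ResDimLE 𝒲 A n) : ResDimLE 𝒳 A n := by
  obtain ⟨X, d, ε, h1, h2, h3, h4, h5⟩ := hA
  exact ⟨X, d, ε, fun i hi => h _ (h1 i hi), h2, h3, h4, h5⟩

lemma resDimLE_zero_of_mem {𝒳 : C → Prop} {A : C} (hA : 𝒳 A) : ResDimLE 𝒳 A 0 := by
  refine ⟨fun i => match i with | 0 => A | _+1 => 0,
    fun i => 0, 𝟙 A, ?_, ?_, inferInstance, ⟨by simp, ?_⟩, fun i => ⟨by simp, ?_⟩⟩
  · intro i hi
    obtain rfl : i = 0 := Nat.le_zero.mp hi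
    exact hA
  · intro i hi
    match i, hi with
    | (j+1), _ => exact isZero_zero C
  · rw [ShortComplex.exact_iff_mono _ rfl]
    infer_instance
  · exact ShortComplex.exact_of_isZero_X₂ _ (isZero_zero C)

lemma exists_iso_of_resDimLE_zero {𝒳 : C → Prop} {A : C} (h : ResDimLE 𝒳 A 0) :
    ∃ X₀ : C, 𝒳 X₀ ∧ Nonempty (X₀ ≅ A) := by
  obtain ⟨X, d, ε, h1, h2, h3, ⟨w0, hex0⟩, h5⟩ := h
  have hz : d 0 = 0 := (h2 1 (by omega)).eq_zero_of_src _
  have : Mono ε := by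
    rw [ShortComplex.exact_iff_mono _ hz] at hex0
    exact hex0
  have : IsIso ε := isIso_of_mono_of_epi ε
  exact ⟨X 0, h1 0 le_rfl, ⟨asIso ε⟩⟩

lemma exists_ses_of_resDimLE_succ {𝒳 : C → Prop} {A : C} {n : ℕ} (h : ResDimLE 𝒳 A (n + 1)) :
    ∃ (K X₀ : C) (i : K ⟶ X₀) (p : X₀ ⟶ A), IsSES i p ∧ 𝒳 X₀ ∧ ResDimLE 𝒳 K n := by
  obtain ⟨X, d, ε, h1, h2, h3, ⟨w0, hex0⟩, h5⟩ := h
  refine ⟨kernel ε, X 0, kernel.ι ε, ε, isSES_of_epi ε, h1 0 (by omega), ?_⟩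
  obtain ⟨w1, hex1⟩ := h5 0
  have hepi : Epi (kernel.lift ε (d 0) w0) := by
    rw [ShortComplex.exact_iff_epi_kernel_lift] at hex0
    exact hex0
  refine ⟨fun i => X (i + 1), fun i => d (i + 1), kernel.lift ε (d 0) w0,
    fun i hi => h1 _ (by omega), fun i hi => h2 _ (by omega), hepi, ⟨?_, ?_⟩, fun i => h5 (i + 1)⟩
  · rw [← cancel_mono (kernel.ι ε), Category.assoc, kernel.lift_ι, w1, zero_comp]
  · let φ : ShortComplex.mk (d 1) (kernel.lift ε (d 0) w0)
        (by rw [← cancel_mono (kernel.ι ε), Category.assoc, kernel.lift_ι, w1, zero_comp]) ⟶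
        ShortComplex.mk (d 1) (d 0) w1 :=
      { τ₁ := 𝟙 _, τ₂ := 𝟙 _, τ₃ := kernel.ι ε,
        comm₁₂ := by simp, comm₂₃ := by simp [kernel.lift_ι] }
    have : Mono φ.τ₃ := by dsimp [φ]; infer_instance
    rw [ShortComplex.exact_iff_of_epi_of_isIso_of_mono φ]
    exact hex1

lemma resDimLE_succ_of_ses {𝒳 : C → Prop} {K W A : C} {n : ℕ} {i : K ⟶ W} {p : W ⟶ A}
    (hses : IsSES i p) (hW : 𝒳 W) (hK : ResDimLE 𝒳 K n) : ResDimLE 𝒳 A (n + 1) := by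
  obtain ⟨X, d, ε, h1, h2, h3, ⟨w0, hex0⟩, h5⟩ := hK
  obtain ⟨z, hse⟩ := hses
  refine ⟨fun j => match j with | 0 => W | j+1 => X j,
    fun j => match j with | 0 => ε ≫ i | j+1 => d j, p, ?_, ?_, hse.epi_g, ⟨?_, ?_⟩, ?_⟩
  · intro j hj
    match j with
    | 0 => exact hW
    | j+1 => exact h1 j (by omega)
  · intro j hj
    match j, hj with
    | (m+1), _ => exact h2 m (by omega)
  · show (ε ≫ i) ≫ p = 0
    rw [Category.assoc, z, comp_zero]
  · let φ : ShortComplex.mk (ε ≫ i) p (by rw [Category.assoc, z, comp_zero]) ⟶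
        ShortComplex.mk i p z :=
      { τ₁ := ε, τ₂ := 𝟙 _, τ₃ := 𝟙 _, comm₁₂ := by simp, comm₂₃ := by simp }
    have : Epi φ.τ₁ := h3
    rw [ShortComplex.exact_iff_of_epi_of_isIso_of_mono φ]
    exact hse.exact
  · intro j
    match j with
    | 0 =>
      refine ⟨?_, ?_⟩
      · show d 0 ≫ (ε ≫ i) = 0
        rw [← Category.assoc, w0, zero_comp]
      · have : Mono i := hse.mono_f
        let φ : ShortComplex.mk (d 0) ε w0 ⟶
            ShortComplex.mk (d 0) (ε ≫ i) (by rw [← Category.assoc, w0, zero_comp]) :=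
          { τ₁ := 𝟙 _, τ₂ := 𝟙 _, τ₃ := i, comm₁₂ := by simp, comm₂₃ := by simp }
        have : Mono φ.τ₃ := by dsimp [φ]; infer_instance
        rw [← ShortComplex.exact_iff_of_epi_of_isIso_of_mono φ]
        exact hex0
    | j+1 => exact h5 j


lemma isSES_split {Y G A : C} {f : Y ⟶ G} {g : G ⟶ A} (h : IsSES f g)
    (h0 : extZero A Y 1) : ∃ s : A ⟶ G, s ≫ g = 𝟙 A := by
  obtain ⟨z, hse⟩ := h
  letI := HasDerivedCategory.standard C
  have hcl : hse.extClass = 0 := @Subsingleton.elim _ h0 _ _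
  have hδ : hse.singleTriangle.mor₃ = 0 := by
    have h1 : hse.singleTriangle.mor₃ = hse.singleδ := rfl
    have h2 : hse.extClass.hom = hse.singleδ := hse.extClass_hom
    rw [h1, ← h2, hcl, Ext.zero_hom]
    rfl
  obtain ⟨σ, hσ⟩ := Pretriangulated.Triangle.coyoneda_exact₃ _ hse.singleTriangle_distinguished
    (𝟙 (hse.singleTriangle.obj₃)) (by rw [hδ, comp_zero])
  let H := DerivedCategory.homologyFunctor C 0
  let e1 : singleFunctor C 0 ≅ CochainComplex.singleFunctor C 0 ⋙ DerivedCategory.Q :=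
    (SingleFunctors.evaluation C (DerivedCategory C) (0 : ℤ)).mapIso (singleFunctorsPostcompQIso C)
  let ν : singleFunctor C 0 ⋙ H ≅ 𝟭 C :=
    Functor.isoWhiskerRight e1 H ≪≫ Functor.associator _ _ _ ≪≫
      Functor.isoWhiskerLeft (CochainComplex.singleFunctor C 0) (homologyFunctorFactors C 0) ≪≫
      HomologicalComplex.homologyFunctorSingleIso C (ComplexShape.up ℤ) 0
  have hmor₂ : hse.singleTriangle.mor₂ = (singleFunctor C 0).map g := rfl
  refine ⟨ν.inv.app A ≫ H.map σ ≫ ν.hom.app G, ?_⟩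
  have hnat : H.map ((singleFunctor C 0).map g) ≫ ν.hom.app A = ν.hom.app G ≫ g :=
    ν.hom.naturality g
  have : H.map σ ≫ ν.hom.app G ≫ g = ν.hom.app A := by
    erw [← hnat, ← Category.assoc, ← H.map_comp, ← hmor₂, ← hσ, H.map_id, Category.id_comp]
  simp only [Category.assoc]
  exact (congrArg (ν.inv.app A ≫ ·) ((Category.assoc _ _ _).trans this)).trans (ν.inv_hom_id_app A)


lemma isSES_of_mono' {A B : C} (f : A ⟶ B) [Mono f] : IsSES f (cokernel.π f) :=
  isSES_of_mono f

/-- Pushout of a SES `0 → Y → G → A → 0` along the mono of a SES `0 → G → W → G' → 0`. -/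
lemma po2 {Y G A W G' : C} {c : Y ⟶ G} {d : G ⟶ A} {j : G ⟶ W} {q : W ⟶ G'}
    (h1 : IsSES c d) (h2 : IsSES j q) :
    ∃ (aP : A ⟶ cokernel (c ≫ j)) (π' : cokernel (c ≫ j) ⟶ G'),
      IsSES (c ≫ j) (cokernel.π (c ≫ j)) ∧ IsSES aP π' := by
  obtain ⟨z1, hse1⟩ := h1
  obtain ⟨z2, hse2⟩ := h2
  have hmc : Mono c := hse1.mono_f
  have hmj : Mono j := hse2.mono_f
  have hed : Epi d := hse1.epi_g
  have heq : Epi q := hse2.epi_g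
  have hmcj : Mono (c ≫ j) := mono_comp c j
  have hsesP : IsSES (c ≫ j) (cokernel.π (c ≫ j)) := isSES_of_mono' (c ≫ j)
  obtain ⟨zP, hseP⟩ := hsesP
  set π := cokernel.π (c ≫ j) with hπdef
  have hcjπ : c ≫ (j ≫ π) = 0 := by rw [← Category.assoc]; exact cokernel.condition _
  let aP : A ⟶ cokernel (c ≫ j) := hse1.exact.desc (j ≫ π) hcjπ
  have haP : d ≫ aP = j ≫ π := hse1.exact.g_desc (j ≫ π) hcjπ
  have hcjq : (c ≫ j) ≫ q = 0 := by rw [Category.assoc, z2, comp_zero]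
  let π' : cokernel (c ≫ j) ⟶ G' := cokernel.desc (c ≫ j) q hcjq
  have hπ' : π ≫ π' = q := cokernel.π_desc (c ≫ j) q hcjq
  have hzero : aP ≫ π' = 0 := by
    rw [← cancel_epi d, ← Category.assoc, haP, Category.assoc, hπ', z2, comp_zero]
  have hmono : Mono aP := by
    rw [Preadditive.mono_iff_cancel_zero]
    intro T t ht
    obtain ⟨T', e, he, s, hs⟩ := surjective_up_to_refinements_of_epi d t
    have hsj : (s ≫ j) ≫ π = 0 := by
      rw [Category.assoc, ← haP, ← Category.assoc, ← hs, Category.assoc, ht, comp_zero]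
    obtain ⟨T'', e₂, he₂, y, hy⟩ :=
      (ShortComplex.mk (c ≫ j) π zP).exact_iff_exact_up_to_refinements.1 hseP.exact (s ≫ j) hsj
    replace hy : e₂ ≫ (s ≫ j) = y ≫ (c ≫ j) := hy
    have hy' : e₂ ≫ s = y ≫ c := by
      have h' : (e₂ ≫ s) ≫ j = (y ≫ c) ≫ j := by
        rw [Category.assoc, hy, Category.assoc]
      exact (cancel_mono j).1 h'
    have h'' : (e₂ ≫ e) ≫ t = 0 := by
      rw [Category.assoc, hs, ← Category.assoc, hy', Category.assoc, z1, comp_zero]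
    exact zero_of_epi_comp (e₂ ≫ e) h''
  have hepi : Epi π' := epi_of_epi_fac hπ'
  have hexact : (ShortComplex.mk aP π' hzero).Exact := by
    rw [ShortComplex.exact_iff_exact_up_to_refinements]
    intro T x₂ hx₂
    replace hx₂ : x₂ ≫ π' = 0 := hx₂
    obtain ⟨T', e, he, u, hu⟩ := surjective_up_to_refinements_of_epi π x₂
    have huq : u ≫ q = 0 := by
      rw [← hπ', ← Category.assoc, ← hu, Category.assoc, hx₂, comp_zero]
    obtain ⟨v, hv⟩ := hse2.exact.lift' u huq
    replace hv : v ≫ j = u := hv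
    refine ⟨T', e, he, v ≫ d, ?_⟩
    show e ≫ x₂ = (v ≫ d) ≫ aP
    rw [hu, ← hv, Category.assoc, Category.assoc, haP]
  exact ⟨aP, π', ⟨zP, hseP⟩, ⟨hzero, { exact := hexact, mono_f := hmono, epi_g := hepi }⟩⟩

/-- "Pushout" of two SESs over `K`, realized as the cokernel of `K → G ⊞ Y`. -/
lemma po_biprod {K G A Y B : C} {i : K ⟶ G} {p : G ⟶ A} {a : K ⟶ Y} {b : Y ⟶ B}
    (h1 : IsSES i p) (h2 : IsSES a b) :
    ∃ (P : C) (f₁ : Y ⟶ P) (g₁ : P ⟶ A) (f₂ : G ⟶ P) (g₂ : P ⟶ B),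
      IsSES f₁ g₁ ∧ IsSES f₂ g₂ := by
  obtain ⟨z1, hse1⟩ := h1
  obtain ⟨z2, hse2⟩ := h2
  have hmi : Mono i := hse1.mono_f
  have hma : Mono a := hse2.mono_f
  have hep : Epi p := hse1.epi_g
  have heb : Epi b := hse2.epi_g
  set μ := biprod.lift i a with hμdef
  have hμeq : μ = i ≫ biprod.inl + a ≫ biprod.inr := biprod.lift_eq
  have hmμ : Mono μ := by
    have h : Mono (μ ≫ biprod.fst) := by
      rw [hμdef, biprod.lift_fst]; exact hmi
    exact mono_of_mono μ biprod.fst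
  have hsesP : IsSES μ (cokernel.π μ) := isSES_of_mono' μ
  obtain ⟨zP, hseP⟩ := hsesP
  set π := cokernel.π μ with hπdef
  have hμπ : μ ≫ π = 0 := cokernel.condition μ
  have hiπ : i ≫ (biprod.inl ≫ π) = -(a ≫ (biprod.inr ≫ π)) := by
    have h0 : (i ≫ biprod.inl + a ≫ biprod.inr) ≫ π = 0 := by rw [← hμeq]; exact hμπ
    rw [Preadditive.add_comp, Category.assoc, Category.assoc] at h0
    exact eq_neg_of_add_eq_zero_left h0
  have haπ : a ≫ (biprod.inr ≫ π) = -(i ≫ (biprod.inl ≫ π)) := by rw [hiπ, neg_neg]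
  -- first SES : 0 → Y → P → A → 0
  have hd1 : μ ≫ biprod.desc p 0 = 0 := by rw [hμdef, biprod.lift_desc, z1]; simp
  let g₁ := cokernel.desc μ (biprod.desc p 0) hd1
  have hg₁ : π ≫ g₁ = biprod.desc p 0 := cokernel.π_desc _ _ _
  have hz₁ : (biprod.inr ≫ π) ≫ g₁ = 0 := by
    rw [Category.assoc, hg₁, biprod.inr_desc]
  have hmono₁ : Mono (biprod.inr ≫ π) := by
    rw [Preadditive.mono_iff_cancel_zero]
    intro T t ht
    rw [← Category.assoc] at ht
    obtain ⟨T', e, he, k, hk⟩ :=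
      (ShortComplex.mk μ π zP).exact_iff_exact_up_to_refinements.1 hseP.exact
        (t ≫ biprod.inr) ht
    replace hk : e ≫ (t ≫ (biprod.inr : Y ⟶ G ⊞ Y)) = k ≫ μ := hk
    have hki : k ≫ i = 0 := by
      have h' : (e ≫ (t ≫ (biprod.inr : Y ⟶ G ⊞ Y))) ≫ biprod.fst = (k ≫ μ) ≫ biprod.fst := by
        rw [hk]
      simpa [hμdef] using h'.symm
    have hk0 : k = 0 := by
      rw [← cancel_mono i, hki, zero_comp]
    have het : e ≫ t = 0 := by
      have h' : (e ≫ (t ≫ (biprod.inr : Y ⟶ G ⊞ Y))) ≫ biprod.snd = (k ≫ μ) ≫ biprod.snd := by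
        rw [hk]
      simpa [hμdef, hk0] using h'
    exact zero_of_epi_comp e het
  have hepi₁ : Epi g₁ := by
    have h' : (biprod.inl ≫ π) ≫ g₁ = p := by rw [Category.assoc, hg₁, biprod.inl_desc]
    exact epi_of_epi_fac h'
  have hexact₁ : (ShortComplex.mk (biprod.inr ≫ π) g₁ hz₁).Exact := by
    rw [ShortComplex.exact_iff_exact_up_to_refinements]
    intro T x₂ hx₂
    replace hx₂ : x₂ ≫ g₁ = 0 := hx₂
    obtain ⟨T', e, he, u, hu⟩ := surjective_up_to_refinements_of_epi π x₂
    have hup : (u ≫ biprod.fst) ≫ p = 0 := by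
      have h' : u ≫ biprod.desc p 0 = 0 := by
        rw [← hg₁, ← Category.assoc, ← hu, Category.assoc, hx₂, comp_zero]
      rw [biprod.desc_eq] at h'
      simpa using h'
    obtain ⟨k, hk⟩ := hse1.exact.lift' (u ≫ biprod.fst) hup
    replace hk : k ≫ i = u ≫ biprod.fst := hk
    have hudec : u = (u ≫ biprod.fst) ≫ biprod.inl + (u ≫ biprod.snd) ≫ biprod.inr := by
      conv_lhs => rw [← Category.comp_id u, ← biprod.total]
      rw [Preadditive.comp_add, ← Category.assoc, ← Category.assoc]
    have hgoal : (u ≫ biprod.fst) ≫ (biprod.inl ≫ π) = -((k ≫ a) ≫ (biprod.inr ≫ π)) := by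
      rw [← hk, Category.assoc, hiπ]
      simp
    refine ⟨T', e, he, u ≫ biprod.snd - k ≫ a, ?_⟩
    show e ≫ x₂ = (u ≫ biprod.snd - k ≫ a) ≫ (biprod.inr ≫ π)
    calc e ≫ x₂ = u ≫ π := hu
      _ = (u ≫ biprod.fst) ≫ (biprod.inl ≫ π) + (u ≫ biprod.snd) ≫ (biprod.inr ≫ π) := by
          conv_lhs => rw [hudec]
          simp only [Preadditive.add_comp, Category.assoc]
      _ = (u ≫ biprod.snd - k ≫ a) ≫ (biprod.inr ≫ π) := by
          rw [hgoal, Preadditive.sub_comp]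
          abel
  -- second SES : 0 → G → P → B → 0
  have hd2 : μ ≫ biprod.desc 0 b = 0 := by rw [hμdef, biprod.lift_desc, z2]; simp
  let g₂ := cokernel.desc μ (biprod.desc 0 b) hd2
  have hg₂ : π ≫ g₂ = biprod.desc 0 b := cokernel.π_desc _ _ _
  have hz₂ : (biprod.inl ≫ π) ≫ g₂ = 0 := by
    rw [Category.assoc, hg₂, biprod.inl_desc]
  have hmono₂ : Mono (biprod.inl ≫ π) := by
    rw [Preadditive.mono_iff_cancel_zero]
    intro T t ht
    rw [← Category.assoc] at ht
    obtain ⟨T', e, he, k, hk⟩ :=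
      (ShortComplex.mk μ π zP).exact_iff_exact_up_to_refinements.1 hseP.exact
        (t ≫ biprod.inl) ht
    replace hk : e ≫ (t ≫ (biprod.inl : G ⟶ G ⊞ Y)) = k ≫ μ := hk
    have hka : k ≫ a = 0 := by
      have h' : (e ≫ (t ≫ (biprod.inl : G ⟶ G ⊞ Y))) ≫ biprod.snd = (k ≫ μ) ≫ biprod.snd := by
        rw [hk]
      simpa [hμdef] using h'.symm
    have hk0 : k = 0 := by
      rw [← cancel_mono a, hka, zero_comp]
    have het : e ≫ t = 0 := by
      have h' : (e ≫ (t ≫ (biprod.inl : G ⟶ G ⊞ Y))) ≫ biprod.fst = (k ≫ μ) ≫ biprod.fst := by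
        rw [hk]
      simpa [hμdef, hk0] using h'
    exact zero_of_epi_comp e het
  have hepi₂ : Epi g₂ := by
    have h' : (biprod.inr ≫ π) ≫ g₂ = b := by rw [Category.assoc, hg₂, biprod.inr_desc]
    exact epi_of_epi_fac h'
  have hexact₂ : (ShortComplex.mk (biprod.inl ≫ π) g₂ hz₂).Exact := by
    rw [ShortComplex.exact_iff_exact_up_to_refinements]
    intro T x₂ hx₂
    replace hx₂ : x₂ ≫ g₂ = 0 := hx₂
    obtain ⟨T', e, he, u, hu⟩ := surjective_up_to_refinements_of_epi π x₂
    have hub : (u ≫ biprod.snd) ≫ b = 0 := by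
      have h' : u ≫ biprod.desc 0 b = 0 := by
        rw [← hg₂, ← Category.assoc, ← hu, Category.assoc, hx₂, comp_zero]
      rw [biprod.desc_eq] at h'
      simpa using h'
    obtain ⟨k, hk⟩ := hse2.exact.lift' (u ≫ biprod.snd) hub
    replace hk : k ≫ a = u ≫ biprod.snd := hk
    have hudec : u = (u ≫ biprod.fst) ≫ biprod.inl + (u ≫ biprod.snd) ≫ biprod.inr := by
      conv_lhs => rw [← Category.comp_id u, ← biprod.total]
      rw [Preadditive.comp_add, ← Category.assoc, ← Category.assoc]
    have hgoal : (u ≫ biprod.snd) ≫ (biprod.inr ≫ π) = -((k ≫ i) ≫ (biprod.inl ≫ π)) := by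
      rw [← hk, Category.assoc, haπ]
      simp
    refine ⟨T', e, he, u ≫ biprod.fst - k ≫ i, ?_⟩
    show e ≫ x₂ = (u ≫ biprod.fst - k ≫ i) ≫ (biprod.inl ≫ π)
    calc e ≫ x₂ = u ≫ π := hu
      _ = (u ≫ biprod.fst) ≫ (biprod.inl ≫ π) + (u ≫ biprod.snd) ≫ (biprod.inr ≫ π) := by
          conv_lhs => rw [hudec]
          simp only [Preadditive.add_comp, Category.assoc]
      _ = (u ≫ biprod.fst - k ≫ i) ≫ (biprod.inl ≫ π) := by
          rw [hgoal, Preadditive.sub_comp]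
          abel
  exact ⟨cokernel μ, biprod.inr ≫ π, g₁, biprod.inl ≫ π, g₂,
    ⟨hz₁, { exact := hexact₁, mono_f := hmono₁, epi_g := hepi₁ }⟩,
    ⟨hz₂, { exact := hexact₂, mono_f := hmono₂, epi_g := hepi₂ }⟩⟩


lemma extZero_of_isZero_fst {Z Y : C} (hZ : IsZero Z) (n : ℕ) : extZero Z Y n := by
  rw [extZero_iff]
  intro x
  have hx : x = (Ext.mk₀ (𝟙 Z)).comp x (zero_add n) := (Ext.mk₀_id_comp x).symm
  rw [hx, hZ.eq_of_src (𝟙 Z) 0, Ext.mk₀_zero, Ext.zero_comp]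

lemma extZero_of_isZero_snd {X Z : C} (hZ : IsZero Z) (n : ℕ) : extZero X Z n := by
  rw [extZero_iff]
  intro x
  have hx : x = x.comp (Ext.mk₀ (𝟙 Z)) (add_zero n) := (Ext.comp_mk₀_id x).symm
  rw [hx, hZ.eq_of_src (𝟙 Z) 0, Ext.mk₀_zero, Ext.comp_zero]

-- ==================== Ext-characterization of finite resolution dimension ====================

variable {𝒳 : C → Prop}

lemma extZero_of_resDimLE (h1 : CHCP 𝒳 (rightOrth 𝒳)) :
    ∀ n, ∀ A : C, ResDimLE 𝒳 A n → ∀ Y, rightOrth 𝒳 Y → ∀ k, n + 1 ≤ k → extZero A Y k := by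
  intro n
  induction n with
  | zero =>
    intro A hA Y hY k hk
    obtain ⟨X₀, hX₀, ⟨e⟩⟩ := exists_iso_of_resDimLE_zero hA
    exact extZero_iso_fst e (h1.hereditary X₀ Y hX₀ hY k (by omega))
  | succ n ih =>
    intro A hA Y hY k hk
    obtain ⟨K, X₀, i, p, hses, hX₀, hK⟩ := exists_ses_of_resDimLE_succ hA
    obtain ⟨k', rfl⟩ : ∃ k', k = k' + 1 := ⟨k - 1, by omega⟩
    exact extZero_right_fst hses (ih K hK Y hY k' (by omega))
      (h1.hereditary X₀ Y hX₀ hY (k' + 1) (by omega))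

lemma resDimLE_of_extZero (h1 : CHCP 𝒳 (rightOrth 𝒳)) :
    ∀ n, ∀ A : C, (∀ Y, rightOrth 𝒳 Y → extZero A Y (n + 1)) → ResDimLE 𝒳 A n := by
  intro n
  induction n with
  | zero =>
    intro A hA
    exact resDimLE_zero_of_mem ((h1.cotorsion.eqLeft A).mpr (fun B hB => hA B hB))
  | succ n ih =>
    intro A hA
    obtain ⟨Y₀, X₀, f, g, hses, hX₀, hY₀⟩ := (h1.complete A).1
    refine resDimLE_succ_of_ses hses hX₀ (ih Y₀ ?_)
    intro Y hY
    exact extZero_left_fst hses (h1.hereditary X₀ Y hX₀ hY (n + 1) (by omega)) (hA Y hY)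

lemma finResDim_thick (h1 : CHCP 𝒳 (rightOrth 𝒳)) : IsThick (FinResDim 𝒳) := by
  refine ⟨?_, ?_, ?_, ?_⟩
  · -- summands
    intro A B i p hip hB
    obtain ⟨n, hn⟩ := hB
    refine ⟨n, resDimLE_of_extZero h1 n A (fun Y hY => ?_)⟩
    exact extZero_retract_fst i p hip (extZero_of_resDimLE h1 n B hn Y hY (n + 1) le_rfl)
  · -- extensions
    intro A B D f g hses hA hD
    obtain ⟨m, hm⟩ := hA
    obtain ⟨n, hn⟩ := hD
    refine ⟨max m n, resDimLE_of_extZero h1 _ B (fun Y hY => ?_)⟩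
    exact extZero_mid_fst hses (extZero_of_resDimLE h1 m A hm Y hY _ (by omega))
      (extZero_of_resDimLE h1 n D hn Y hY _ (by omega))
  · -- kernels
    intro A B D f g hses hB hD
    obtain ⟨m, hm⟩ := hB
    obtain ⟨n, hn⟩ := hD
    refine ⟨max m n, resDimLE_of_extZero h1 _ A (fun Y hY => ?_)⟩
    exact extZero_left_fst hses (extZero_of_resDimLE h1 m B hm Y hY _ (by omega))
      (extZero_of_resDimLE h1 n D hn Y hY _ (by omega))
  · -- cokernels
    intro A B D f g hses hA hB
    obtain ⟨m, hm⟩ := hA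
    obtain ⟨n, hn⟩ := hB
    refine ⟨max m n + 1, resDimLE_of_extZero h1 _ D (fun Y hY => ?_)⟩
    exact extZero_right_fst hses (extZero_of_resDimLE h1 m A hm Y hY _ (by omega))
      (extZero_of_resDimLE h1 n B hn Y hY _ (by omega))

-- ==================== resolutions by an Ext-injective class ====================

/-- If every object of `P` has no higher Ext into objects of `𝒲`, the same holds for
objects of finite `𝒲`-resolution dimension in the second variable. -/
lemma resDim_inj_extZero {𝒲 P : C → Prop}
    (hinj : ∀ A W, P A → 𝒲 W → ∀ n, 1 ≤ n → extZero A W n) :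
    ∀ m, ∀ B : C, ResDimLE 𝒲 B m → ∀ A, P A → ∀ k, 1 ≤ k → extZero A B k := by
  intro m
  induction m with
  | zero =>
    intro B hB A hA k hk
    obtain ⟨W, hW, ⟨e⟩⟩ := exists_iso_of_resDimLE_zero hB
    exact extZero_iso_snd e (hinj A W hA hW k hk)
  | succ m ih =>
    intro B hB A hA k hk
    obtain ⟨K, W₀, i, p, hses, hW₀, hK⟩ := exists_ses_of_resDimLE_succ hB
    obtain ⟨k', rfl⟩ : ∃ k', k = k' + 1 := ⟨k - 1, by omega⟩
    exact extZero_right_snd hses (hinj A W₀ hA hW₀ _ (by omega)) (ih K hK A hA _ (by omega))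

-- ==================== splittings on the other side ====================

lemma isSES_split_left {Y G A : C} {f : Y ⟶ G} {g : G ⟶ A} (h : IsSES f g)
    (h0 : extZero A Y 1) : ∃ p : G ⟶ Y, f ≫ p = 𝟙 Y := by
  obtain ⟨s, hs⟩ := isSES_split h h0
  obtain ⟨z, hse⟩ := h
  have hmf : Mono f := hse.mono_f
  have hk : (𝟙 G - g ≫ s) ≫ g = 0 := by
    rw [Preadditive.sub_comp, Category.id_comp, Category.assoc, hs, Category.comp_id, sub_self]
  obtain ⟨p, hp⟩ := hse.exact.lift' (𝟙 G - g ≫ s) hk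
  replace hp : p ≫ f = 𝟙 G - g ≫ s := hp
  refine ⟨p, ?_⟩
  have : (f ≫ p) ≫ f = 𝟙 Y ≫ f := by
    rw [Category.assoc, hp, Preadditive.comp_sub, Category.comp_id, Category.id_comp,
      ← Category.assoc, z, zero_comp, sub_zero]
  exact (cancel_mono f).1 this

-- ==================== generic Auslander–Buchweitz approximations ====================

lemma AB_approx {𝒜 𝒲 : C → Prop}
    (hsum : ClosedUnderSummands 𝒜) (hext : ClosedUnderExtensions 𝒜)
    (hcog : ∀ G, 𝒜 G → ∃ (W G' : C) (j : G ⟶ W) (q : W ⟶ G'), IsSES j q ∧ 𝒲 W ∧ 𝒜 G')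
    (hzero : ∀ Z : C, IsZero Z → 𝒲 Z) :
    ∀ n, ∀ A : C, ResDimLE 𝒜 A n →
      (∃ (Y G : C) (f : Y ⟶ G) (g : G ⟶ A), IsSES f g ∧ 𝒜 G ∧ FinResDim 𝒲 Y) ∧
      (∃ (Y G' : C) (f : A ⟶ Y) (g : Y ⟶ G'), IsSES f g ∧ FinResDim 𝒲 Y ∧ 𝒜 G') := by
  intro n
  induction n with
  | zero =>
    intro A hA
    obtain ⟨X₀, hX₀, ⟨e⟩⟩ := exists_iso_of_resDimLE_zero hA
    have hA𝒜 : 𝒜 A := hsum e.inv e.hom e.inv_hom_id hX₀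
    constructor
    · exact ⟨0, A, 0, 𝟙 A, isSES_zero_id A, hA𝒜,
        ⟨0, resDimLE_zero_of_mem (hzero _ (isZero_zero C))⟩⟩
    · obtain ⟨W, G', j, q, hses, hW, hG'⟩ := hcog A hA𝒜
      exact ⟨W, G', j, q, hses, ⟨0, resDimLE_zero_of_mem hW⟩, hG'⟩
  | succ n ih =>
    intro A hA
    obtain ⟨K, G₀, i, p, hses_ip, hG₀, hK⟩ := exists_ses_of_resDimLE_succ hA
    obtain ⟨Y_K, G_K, a, b, hses_ab, ⟨m, hYK⟩, hGK⟩ := (ih K hK).2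
    obtain ⟨P, f₁, g₁, f₂, g₂, hS1, hS2⟩ := po_biprod hses_ip hses_ab
    have hP : 𝒜 P := hext f₂ g₂ hS2 hG₀ hGK
    have hprecover : ∃ (Y G : C) (f : Y ⟶ G) (g : G ⟶ A), IsSES f g ∧ 𝒜 G ∧ FinResDim 𝒲 Y :=
      ⟨Y_K, P, f₁, g₁, hS1, hP, ⟨m, hYK⟩⟩
    refine ⟨hprecover, ?_⟩
    obtain ⟨Y_A, G_A, c, d, hses_cd, hGA, ⟨mA, hYA⟩⟩ := hprecover
    obtain ⟨W, G', j, q, hses_jq, hW, hG'⟩ := hcog G_A hGA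
    obtain ⟨aP, π', hses_cjπ, hses_aP⟩ := po2 hses_cd hses_jq
    exact ⟨cokernel (c ≫ j), G', aP, π', hses_aP,
      ⟨mA + 1, resDimLE_succ_of_ses hses_cjπ hW hYA⟩, hG'⟩


end Aux

/-- If `𝒳 ⊆ 𝒢`, `(𝒳, 𝒳^⊥)` is a complete hereditary cotorsion
pair and `(𝒢, 𝒢^⊥, 𝒳 ∩ 𝒳^⊥)` is a left AB-context, then `(𝒢, 𝒳̂, 𝒳^⊥)` is a
hereditary Hovey triple: `𝒳̂` is thick, `(𝒢, 𝒳̂ ∩ 𝒳^⊥)` is a complete hereditary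
cotorsion pair, and `𝒢 ∩ 𝒳̂ = 𝒳` (so `(𝒢 ∩ 𝒳̂, 𝒳^⊥) = (𝒳, 𝒳^⊥)` is a complete
hereditary cotorsion pair). -/
theorem statement18 {C : Type u} [Category.{v} C] [Abelian C] [HasExt.{w} C]
    {𝒳 𝒢 : C → Prop} (hXG : ∀ A, 𝒳 A → 𝒢 A)
    (h1 : CHCP 𝒳 (rightOrth 𝒳))
    (h2 : LeftABContext 𝒢 (rightOrth 𝒢) (Inter 𝒳 (rightOrth 𝒳))) :
    IsThick (FinResDim 𝒳) ∧
    CHCP 𝒢 (Inter (FinResDim 𝒳) (rightOrth 𝒳)) ∧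
    (∀ A, (𝒢 A ∧ FinResDim 𝒳 A) ↔ 𝒳 A)    := by
  classical
  -- basic closure properties of `𝒳` and `ω := 𝒳 ∩ 𝒳^⊥`
  have hXmem : ∀ A : C, 𝒳 A ↔ leftOrth (rightOrth 𝒳) A := h1.cotorsion.eqLeft
  have hXsum : ClosedUnderSummands 𝒳 := by
    intro A B i p hip hB
    exact (hXmem A).mpr (fun Y hY => extZero_retract_fst i p hip ((hXmem B).mp hB Y hY))
  have hXext : ClosedUnderExtensions 𝒳 := by
    intro A B D f g hses hA hD
    exact (hXmem B).mpr (fun Y hY =>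
      extZero_mid_fst hses ((hXmem A).mp hA Y hY) ((hXmem D).mp hD Y hY))
  have hXcog : ∀ G, 𝒳 G → ∃ (W G' : C) (j : G ⟶ W) (q : W ⟶ G'),
      IsSES j q ∧ Inter 𝒳 (rightOrth 𝒳) W ∧ 𝒳 G' := by
    intro G hG
    obtain ⟨Y', X', f, g, hses, hY', hX'⟩ := (h1.complete G).2
    exact ⟨Y', X', f, g, hses, ⟨hXext f g hses hG hX', hY'⟩, hX'⟩
  have hzeroω : ∀ Z : C, IsZero Z → Inter 𝒳 (rightOrth 𝒳) Z := by
    intro Z hZ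
    exact ⟨(hXmem Z).mpr (fun Y hY => extZero_of_isZero_fst hZ 1),
      fun X hX => extZero_of_isZero_snd hZ 1⟩
  have hinjX : ∀ A W, 𝒳 A → Inter 𝒳 (rightOrth 𝒳) W → ∀ n, 1 ≤ n → extZero A W n :=
    fun A W hA hW n hn => h1.hereditary A W hA hW.2 n hn
  have hinjG : ∀ A W, 𝒢 A → Inter 𝒳 (rightOrth 𝒳) W → ∀ n, 1 ≤ n → extZero A W n :=
    h2.ab3.2.2
  have hGcog := h2.ab3.2.1.2
  have hGsum := h2.ab1.1
  have hGext := h2.ab1.2.1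
  have hGker := h2.ab1.2.2
  -- `𝒢 ∩ 𝒳̂ = 𝒳`
  have claim3aux : ∀ n, ∀ A : C, 𝒢 A → ResDimLE 𝒳 A n → 𝒳 A := by
    intro n
    induction n with
    | zero =>
      intro A hG hres
      obtain ⟨X₀, hX₀, ⟨e⟩⟩ := exists_iso_of_resDimLE_zero hres
      exact hXsum e.inv e.hom e.inv_hom_id hX₀
    | succ n ih =>
      intro A hG hres
      obtain ⟨Y₀, X₀, f, g, hses, hX₀, hY₀⟩ := (h1.complete A).1
      have hY₀G : 𝒢 Y₀ := hGker f g hses (hXG X₀ hX₀) hG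
      have hY₀res : ResDimLE 𝒳 Y₀ n := by
        refine resDimLE_of_extZero h1 n Y₀ (fun Y hY => ?_)
        exact extZero_left_fst hses (h1.hereditary X₀ Y hX₀ hY (n + 1) (by omega))
          (extZero_of_resDimLE h1 (n + 1) A hres Y hY (n + 2) (by omega))
      have hY₀X : 𝒳 Y₀ := ih Y₀ hY₀G hY₀res
      have h0 : extZero A Y₀ 1 := hinjG A Y₀ hG ⟨hY₀X, hY₀⟩ 1 le_rfl
      refine (hXmem A).mpr (fun Y hY => ?_)
      exact extZero_right_of_extClass_fst hses h0 (n := 0)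
        (h1.hereditary X₀ Y hX₀ hY 1 le_rfl)
  -- objects of finite `ω`-resolution dimension lie in `𝒳̂ ∩ 𝒳^⊥`
  have hωsub : ∀ A : C, Inter 𝒳 (rightOrth 𝒳) A → 𝒳 A := fun A hA => hA.1
  have hRωhat : ∀ {Y : C} {m : ℕ}, ResDimLE (Inter 𝒳 (rightOrth 𝒳)) Y m →
      Inter (FinResDim 𝒳) (rightOrth 𝒳) Y := by
    intro Y m hres
    exact ⟨⟨m, resDimLE_mono hωsub hres⟩,
      fun X hX => resDim_inj_extZero hinjX m Y hres X hX 1 le_rfl⟩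
  -- key vanishing : `Ext^k(𝒢, 𝒳̂ ∩ 𝒳^⊥) = 0` for `k ≥ 1`
  have hGR : ∀ A B : C, 𝒢 A → Inter (FinResDim 𝒳) (rightOrth 𝒳) B →
      ∀ k, 1 ≤ k → extZero A B k := by
    intro A B hA hB k hk
    obtain ⟨⟨nB, hres⟩, hBperp⟩ := hB
    obtain ⟨Y_B, X', f, g, hses, ⟨mY, hYres⟩, hX'⟩ :=
      (AB_approx hXsum hXext hXcog hzeroω nB B hres).2
    obtain ⟨k', rfl⟩ : ∃ k', k = k' + 1 := ⟨k - 1, by omega⟩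
    exact extZero_left_of_extClass_snd hses (hBperp X' hX')
      (resDim_inj_extZero hinjG mY Y_B hYres A hA (k' + 1) (by omega))
  refine ⟨finResDim_thick h1, ⟨⟨?_, ?_⟩, ?_, ?_⟩,
    fun A => ⟨fun h => claim3aux h.2.choose A h.1 h.2.choose_spec,
      fun hX => ⟨hXG A hX, ⟨0, resDimLE_zero_of_mem hX⟩⟩⟩⟩
  · -- eqLeft
    intro A
    constructor
    · intro hG B hB
      exact hGR A B hG hB 1 le_rfl
    · intro hL
      obtain ⟨n, hn⟩ := h2.hat_all A
      obtain ⟨Y_A, G_A, f, g, hses, hGA, ⟨m, hYA⟩⟩ :=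
        (AB_approx hGsum hGext hGcog hzeroω n A hn).1
      obtain ⟨s, hs⟩ := isSES_split hses (hL Y_A (hRωhat hYA))
      exact hGsum s g hs hGA
  · -- eqRight
    intro B
    constructor
    · intro hB A hA
      exact hGR A B hA hB 1 le_rfl
    · intro hR
      obtain ⟨n, hn⟩ := h2.hat_all B
      obtain ⟨Y_B, G', f, g, hses, ⟨m, hYB⟩, hG'⟩ :=
        (AB_approx hGsum hGext hGcog hzeroω n B hn).2
      obtain ⟨pretr, hpretr⟩ := isSES_split_left hses (hR G' hG')
      exact ⟨(finResDim_thick h1).1 f pretr hpretr ⟨m, resDimLE_mono hωsub hYB⟩,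
        fun X hX => hR X (hXG X hX)⟩
  · -- complete
    intro A
    obtain ⟨n, hn⟩ := h2.hat_all A
    obtain ⟨hpre, henv⟩ := AB_approx hGsum hGext hGcog hzeroω n A hn
    constructor
    · obtain ⟨Y_A, G_A, f, g, hses, hGA, ⟨m, hYA⟩⟩ := hpre
      exact ⟨Y_A, G_A, f, g, hses, hGA, hRωhat hYA⟩
    · obtain ⟨Y_A, G', f, g, hses, ⟨m, hYA⟩, hG'⟩ := henv
      exact ⟨Y_A, G', f, g, hses, hRωhat hYA, hG'⟩
  · -- hereditary
    intro A B hA hB n hn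
    exact hGR A B hA hB n hn


end PaperAB
end
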